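/- arXiv:math/0507210 — 5 statements merged into one kernel-verified Lean document; each statement's English description precedes it below -/
import Mathlib

section
/- For every natural number n ≥ 1, the factorial derivative operator T satisfies T(x^n) = 1 + x + x^2 + ... + x^{n-1} = ∑_{k=0}^{n-1} x^k. -/
open Polynomial Finset

noncomputable def p : ℕ → Polynomial ℝ
  | 0 => 1
  | n + 1 => X * (X - 1) ^ n

lemma aux1 (m : ℕ) :
    ((X : Polynomial ℝ) - 1) * ∑ k ∈ range m, (m.choose (k+1)) • ((X : Polynomial ℝ) - 1) ^ k
      = (X : Polynomial ℝ) ^ m - 1 := by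
  have hb : ((X : Polynomial ℝ) - 1 + 1) ^ m
      = ∑ k ∈ range (m+1), (m.choose k) • ((X : Polynomial ℝ) - 1) ^ k := by
    rw [add_pow]
    simp [nsmul_eq_mul, mul_comm]
  have hb' : (X : Polynomial ℝ) ^ m
      = 1 + ∑ k ∈ range m, (m.choose (k+1)) • ((X : Polynomial ℝ) - 1) ^ (k+1) := by
    have := hb
    rw [sub_add_cancel, Finset.sum_range_succ'] at this
    simpa [add_comm] using this
  rw [Finset.mul_sum]
  have : ∀ k ∈ range m, ((X : Polynomial ℝ) - 1) * ((m.choose (k+1)) • ((X : Polynomial ℝ) - 1) ^ k)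
      = (m.choose (k+1)) • ((X : Polynomial ℝ) - 1) ^ (k+1) := by
    intro k _
    rw [mul_smul_comm, pow_succ]
    ring_nf
  rw [Finset.sum_congr rfl this, hb']
  ring

lemma aux2 (m : ℕ) :
    ∑ k ∈ range m, (m.choose (k+1)) • ((X : Polynomial ℝ) - 1) ^ k
      = ∑ j ∈ range m, (X : Polynomial ℝ) ^ j := by
  have h2 : ((X : Polynomial ℝ) - 1) * ∑ j ∈ range m, (X : Polynomial ℝ) ^ j
      = (X : Polynomial ℝ) ^ m - 1 := by
    rw [mul_comm]; exact geom_sum_mul X m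
  have hne : ((X : Polynomial ℝ) - 1) ≠ 0 := by
    intro h
    have := congrArg (fun q => q.coeff 1) h
    simp [coeff_one] at this
  exact mul_left_cancel₀ hne (by rw [aux1, h2])

lemma auxX (m : ℕ) :
    (X : Polynomial ℝ) ^ (m+1) = ∑ k ∈ range (m+1), (m.choose k) • p (k+1) := by
  have hb : ((X : Polynomial ℝ)) ^ m = ((X : Polynomial ℝ) - 1 + 1) ^ m := by
    rw [sub_add_cancel]
  have : (X : Polynomial ℝ) ^ (m+1) = X * ((X : Polynomial ℝ) - 1 + 1) ^ m := by
    rw [sub_add_cancel, pow_succ, mul_comm]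
  rw [this, add_pow]
  rw [Finset.mul_sum]
  apply Finset.sum_congr rfl
  intro k _
  simp [p, nsmul_eq_mul]
  ring

theorem stmt0 (T : Polynomial ℝ →ₗ[ℝ] Polynomial ℝ) (hT0 : T (p 0) = 0)
    (hT : ∀ n : ℕ, T (p (n + 1)) = p n) (n : ℕ) (hn : 1 ≤ n) :
    T (X ^ n) = ∑ k ∈ range n, (X : Polynomial ℝ) ^ k := by
  obtain ⟨m, rfl⟩ := Nat.exists_eq_add_of_le hn
  rw [add_comm 1 m, auxX, map_sum]
  have : ∀ k ∈ range (m+1), T ((m.choose k) • p (k+1)) = (m.choose k) • p k := by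
    intro k _
    rw [map_nsmul, hT]
  rw [Finset.sum_congr rfl this, Finset.sum_range_succ']
  have hp0 : (m.choose 0) • p 0 = (1 : Polynomial ℝ) := by simp [p]
  rw [hp0]
  have hsum : ∑ k ∈ range m, (m.choose (k+1)) • p (k+1)
      = X * ∑ k ∈ range m, (m.choose (k+1)) • ((X : Polynomial ℝ) - 1) ^ k := by
    rw [Finset.mul_sum]
    apply Finset.sum_congr rfl
    intro k _
    simp [p, nsmul_eq_mul]
    ring
  rw [hsum, aux2, geom_sum_succ']
  linear_combination geom_sum_mul (X : Polynomial ℝ) m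
end

section
/- For every polynomial p(x) ∈ ℝ[x], the factorial derivative operator satisfies T(x·p(x)) = T(p(x)) + p(x). -/
open Polynomial Finset

theorem stmt1 (T : Polynomial ℝ →ₗ[ℝ] Polynomial ℝ) (hT0 : T (p 0) = 0)
    (hT : ∀ n : ℕ, T (p (n + 1)) = p n) (q : Polynomial ℝ) :
    T (X * q) = T q + q := by
  have h1 : T 1 = 0 := hT0
  have hpow : ∀ n : ℕ, T ((X - 1) ^ (n + 1)) = (X - 1) ^ n := by
    intro n
    induction n with
    | zero =>
      have : ((X : Polynomial ℝ) - 1) ^ 1 = p 1 - 1 := by simp [p]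
      rw [this, map_sub, hT 0, h1]; simp [p]
    | succ k ih =>
      have : ((X : Polynomial ℝ) - 1) ^ (k + 2) = p (k + 2) - (X - 1) ^ (k + 1) := by
        simp [p]; ring
      rw [this, map_sub, hT (k + 1), ih]
      simp [p]; ring
  have key : ∀ n : ℕ, T (X * (X - 1) ^ n) = T ((X - 1) ^ n) + (X - 1) ^ n := by
    intro n
    cases n with
    | zero =>
      have h := hT 0
      simp only [p, pow_zero, mul_one] at h
      simp [h, h1]
    | succ k =>
      have : (X : Polynomial ℝ) * (X - 1) ^ (k + 1) = p (k + 2) := by simp [p]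
      rw [this, hT (k + 1), hpow k]
      simp [p]; ring
  -- extend by linearity
  have main : ∀ r : Polynomial ℝ, T (X * r.comp (X - 1)) = T (r.comp (X - 1)) + r.comp (X - 1) := by
    intro r
    induction r using Polynomial.induction_on with
    | C a =>
      have : (C a : Polynomial ℝ).comp (X - 1) = a • (1 : Polynomial ℝ) := by
        simp [smul_eq_C_mul]
      rw [this, mul_smul_comm, map_smul, map_smul]
      have := key 0
      simp only [pow_zero] at this
      rw [this]
      simp [smul_add]
    | add f g hf hg =>
      simp only [add_comp, mul_add, map_add]
      rw [hf, hg]; ring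
    | monomial n a ih =>
      have : ((C a : Polynomial ℝ) * X ^ (n + 1)).comp (X - 1) = a • (X - 1) ^ (n + 1) := by
        simp [smul_eq_C_mul]
      rw [this, mul_smul_comm, map_smul, map_smul, key (n + 1)]
      simp [smul_add]
  have hq : (q.comp (X + 1)).comp (X - 1) = q := by
    rw [comp_assoc]; simp
  calc T (X * q) = T (X * (q.comp (X + 1)).comp (X - 1)) := by rw [hq]
    _ = T ((q.comp (X + 1)).comp (X - 1)) + (q.comp (X + 1)).comp (X - 1) := main _
    _ = T q + q := by rw [hq]
end

section
/- For all integers n ≥ k ≥ 1, applying the inverse multiplication operator k times to p_n gives x^{-k} p_n(x) = ∑_{h=0}^{n-k} (-1)^{n-k-h} binom(n-1-h, k-1) p_h(x), where p_0(x) = 1 and p_h(x) = x(x-1)^{h-1} for h ≥ 1. -/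
open Polynomial Finset

lemma divX_X_mul (q : Polynomial ℝ) : divX (X * q) = q := by
  ext i
  simp [coeff_divX, coeff_X_mul]

lemma divX_smul' (r : ℝ) (q : Polynomial ℝ) : divX (r • q) = r • divX q := by
  ext i
  simp [coeff_divX]

lemma divX_sum' {s : Finset ℕ} (f : ℕ → Polynomial ℝ) :
    divX (∑ i ∈ s, f i) = ∑ i ∈ s, divX (f i) := by
  ext j
  simp [coeff_divX, finset_sum_coeff]

lemma divX_p (h : ℕ) : divX (p h) = match h with
    | 0 => 0
    | j + 1 => (X - 1) ^ j := by
  match h with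
  | 0 => simp [p, divX_C]
  | j + 1 => simp [p, divX_X_mul]

lemma lemA (m : ℕ) :
    ((X - 1 : Polynomial ℝ)) ^ m = ∑ h ∈ range (m + 1), ((-1 : ℝ) ^ (m - h)) • p h := by
  induction m with
  | zero => simp [p]
  | succ m ih =>
    rw [Finset.sum_range_succ]
    have h1 : ∀ h ∈ range (m + 1), ((-1 : ℝ) ^ (m + 1 - h)) • p h
        = -(((-1 : ℝ) ^ (m - h)) • p h) := by
      intro h hh
      rw [mem_range] at hh
      have : m + 1 - h = (m - h) + 1 := by omega
      rw [this, pow_succ]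
      ring_nf
      rw [neg_smul]
    rw [Finset.sum_congr rfl h1, Finset.sum_neg_distrib, ← ih]
    simp only [Nat.sub_self, pow_zero, one_smul]
    show (X - 1) ^ (m + 1) = -(X - 1) ^ m + p (m + 1)
    simp only [p]
    ring

lemma lemL (k m : ℕ) :
    divX^[k + 1] (p (m + k + 1)) =
      ∑ h ∈ range (m + 1), ((-1 : ℝ) ^ (m - h) * ((m + k - h).choose k : ℝ)) • p h := by
  induction k generalizing m with
  | zero =>
    have : divX^[1] (p (m + 0 + 1)) = (X - 1) ^ m := by
      simp [p, Function.iterate_one, divX_X_mul]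
    rw [this, lemA]
    refine Finset.sum_congr rfl fun h hh => ?_
    simp
  | succ k ih =>
    have harg : m + (k + 1) + 1 = (m + 1) + k + 1 := by omega
    rw [harg, Function.iterate_succ_apply', ih (m + 1), divX_sum']
    have e1 : ∀ h ∈ range (m + 2),
        divX (((-1 : ℝ) ^ (m + 1 - h) * ((m + 1 + k - h).choose k : ℝ)) • p h)
        = ((-1 : ℝ) ^ (m + 1 - h) * ((m + 1 + k - h).choose k : ℝ)) • divX (p h) := by
      intro h _; rw [divX_smul']
    rw [Finset.sum_congr rfl e1, Finset.sum_range_succ']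
    simp only [divX_p]
    rw [smul_zero, add_zero]
    have e2 : ∀ j ∈ range (m + 1),
        ((-1 : ℝ) ^ (m + 1 - (j + 1)) * ((m + 1 + k - (j + 1)).choose k : ℝ)) • (X - 1) ^ j
        = ∑ h ∈ range (j + 1),
            (((-1 : ℝ) ^ (m - j) * ((m + k - j).choose k : ℝ)) * (-1 : ℝ) ^ (j - h)) • p h := by
      intro j hj
      rw [mem_range] at hj
      have h1 : m + 1 - (j + 1) = m - j := by omega
      have h2 : m + 1 + k - (j + 1) = m + k - j := by omega
      rw [h1, h2, lemA, Finset.smul_sum]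
      refine Finset.sum_congr rfl fun h _ => ?_
      rw [smul_smul]
    rw [Finset.sum_congr rfl e2]
    -- swap the double sum
    have swap : (∑ j ∈ range (m + 1), ∑ h ∈ range (j + 1),
          (((-1 : ℝ) ^ (m - j) * ((m + k - j).choose k : ℝ)) * (-1 : ℝ) ^ (j - h)) • p h)
        = ∑ h ∈ range (m + 1), ∑ j ∈ Ico h (m + 1),
          (((-1 : ℝ) ^ (m - j) * ((m + k - j).choose k : ℝ)) * (-1 : ℝ) ^ (j - h)) • p h := by
      have := Finset.sum_Ico_Ico_comm 0 (m + 1)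
        (fun h j => (((-1 : ℝ) ^ (m - j) * ((m + k - j).choose k : ℝ)) * (-1 : ℝ) ^ (j - h)) • p h)
      simp only [Nat.Ico_zero_eq_range] at this
      rw [← this]
    rw [swap]
    refine Finset.sum_congr rfl fun h hh => ?_
    rw [mem_range] at hh
    rw [← Finset.sum_smul]
    congr 1
    have e3 : ∀ j ∈ Ico h (m + 1),
        ((-1 : ℝ) ^ (m - j) * ((m + k - j).choose k : ℝ)) * (-1 : ℝ) ^ (j - h)
        = (-1 : ℝ) ^ (m - h) * ((m + k - j).choose k : ℝ) := by
      intro j hj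
      rw [mem_Ico] at hj
      have : (m - j) + (j - h) = m - h := by omega
      rw [mul_comm ((-1 : ℝ) ^ (m - j)) _, mul_assoc, ← pow_add, this, mul_comm]
    rw [Finset.sum_congr rfl e3, ← Finset.mul_sum]
    congr 1
    -- hockey stick
    have reindex : ∑ j ∈ Ico h (m + 1), (((m + k - j).choose k : ℝ))
        = ∑ i ∈ Icc k (m + k - h), ((i.choose k : ℝ)) := by
      rw [eq_comm]
      apply Finset.sum_nbij' (fun i => m + k - i) (fun j => m + k - j)
      · intro i hi; simp only [mem_Icc, mem_Ico] at *; omega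
      · intro j hj; simp only [mem_Icc, mem_Ico] at *; omega
      · intro i hi; simp only [mem_Icc] at hi; omega
      · intro j hj; simp only [mem_Ico] at hj; omega
      · intro i hi
        simp only [mem_Icc] at hi
        congr 2
        omega
    rw [reindex]
    rw [← Nat.cast_sum, Nat.sum_Icc_choose]
    congr 2
    omega

theorem stmt4 (n k : ℕ) (hk : 1 ≤ k) (hkn : k ≤ n) :
    divX^[k] (p n) =
      ∑ h ∈ range (n - k + 1),
        ((-1 : ℝ) ^ (n - k - h) * ((n - 1 - h).choose (k - 1) : ℝ)) • p h := by
  obtain ⟨k', rfl⟩ : ∃ k', k = k' + 1 := ⟨k - 1, by omega⟩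
  obtain ⟨m, rfl⟩ : ∃ m, n = m + k' + 1 := ⟨n - k' - 1, by omega⟩
  rw [lemL k' m]
  refine Finset.sum_congr (by congr 1; omega) fun h hh => ?_
  rw [mem_range] at hh
  have e1 : m + k' + 1 - (k' + 1) - h = m - h := by omega
  have e2 : m + k' + 1 - 1 - h = m + k' - h := by omega
  have e3 : k' + 1 - 1 = k' := by omega
  rw [e1, e2, e3]
end

section
/- For all natural numbers n and k ≥ 1, evaluating T^k(x^n) at x = 1 gives binom(n, k), and evaluating T^k(x^n) at x = 0 gives binom(n-1, k-1). -/
open Polynomial Finset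

lemma iter_p (T : Polynomial ℝ →ₗ[ℝ] Polynomial ℝ) (hT0 : T (p 0) = 0)
    (hT : ∀ n : ℕ, T (p (n + 1)) = p n) :
    ∀ k m, (⇑T)^[k] (p m) = if k ≤ m then p (m - k) else 0 := by
  intro k
  induction k with
  | zero => intro m; simp
  | succ k ih =>
    intro m
    rw [Function.iterate_succ_apply]
    cases m with
    | zero =>
      rw [hT0]
      have h0 : ∀ j, (⇑T)^[j] (0 : Polynomial ℝ) = 0 := fun j =>
        Function.iterate_fixed (map_zero T) j
      simp [h0]
    | succ m =>
      rw [hT, ih m]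
      simp only [Nat.succ_sub_succ]
      congr 1
      simp [Nat.succ_le_succ_iff]

lemma expand (n : ℕ) :
    (X : Polynomial ℝ) ^ (n + 1) = ∑ j ∈ range (n + 1), n.choose j • p (j + 1) := by
  have h : (X : Polynomial ℝ) ^ (n+1) = X * ((X - 1) + 1) ^ n := by ring
  rw [h, add_pow, Finset.mul_sum]
  apply Finset.sum_congr rfl
  intro j hj
  show X * ((X - 1) ^ j * 1 ^ (n - j) * (n.choose j : Polynomial ℝ)) = _
  show _ = n.choose j • (X * (X - 1) ^ j)
  rw [nsmul_eq_mul]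
  ring

lemma eval_p_one (m : ℕ) : (p m).eval 1 = if m ≤ 1 then 1 else 0 := by
  match m with
  | 0 => simp [p]
  | 1 => simp [p]
  | m + 2 => simp [p]

lemma eval_p_zero (m : ℕ) : (p m).eval 0 = if m = 0 then 1 else 0 := by
  match m with
  | 0 => simp [p]
  | m + 1 => simp [p]

theorem stmt6 (T : Polynomial ℝ →ₗ[ℝ] Polynomial ℝ) (hT0 : T (p 0) = 0)
    (hT : ∀ n : ℕ, T (p (n + 1)) = p n) (n k : ℕ) (hk : 1 ≤ k) :
    ((⇑T)^[k] (X ^ n)).eval 1 = (n.choose k : ℝ) ∧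
    (1 ≤ n → ((⇑T)^[k] (X ^ n)).eval 0 = ((n - 1).choose (k - 1) : ℝ)) := by
  have hiter := iter_p T hT0 hT
  cases n with
  | zero =>
    have h1 : (X : Polynomial ℝ) ^ 0 = p 0 := by simp [p]
    rw [h1, hiter k 0]
    have : ¬ k ≤ 0 := by omega
    simp [this, Nat.choose_eq_zero_of_lt (by omega : 0 < k)]
  | succ n =>
    have hkey : (⇑T)^[k] ((X : Polynomial ℝ) ^ (n + 1))
        = ∑ j ∈ range (n + 1), n.choose j • (if k ≤ j + 1 then p (j + 1 - k) else 0) := by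
      rw [expand n]
      have hTk : ∀ q : Polynomial ℝ, (⇑T)^[k] q = (T ^ k) q := by
        intro q; rw [Module.End.pow_apply]
      rw [hTk, map_sum]
      apply Finset.sum_congr rfl
      intro j hj
      rw [map_nsmul, ← hTk, hiter k (j + 1)]
    constructor
    · rw [hkey, eval_finset_sum]
      have hterm : ∀ j ∈ range (n + 1),
          ((n.choose j • (if k ≤ j + 1 then p (j + 1 - k) else 0)).eval 1 : ℝ)
            = (if j = k - 1 then (n.choose j : ℝ) else 0)
              + (if j = k then (n.choose j : ℝ) else 0) := by
        intro j hj
        rw [eval_smul]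
        by_cases h1 : k ≤ j + 1
        · rw [if_pos h1, eval_p_one]
          by_cases h2 : j = k - 1
          · subst h2
            rw [if_pos (by omega : k - 1 + 1 - k ≤ 1), if_pos rfl,
              if_neg (by omega : ¬ k - 1 = k)]
            simp
          · by_cases h3 : j = k
            · subst h3
              rw [if_pos (by omega : j + 1 - j ≤ 1), if_neg h2, if_pos rfl]
              simp
            · have : ¬ j + 1 - k ≤ 1 := by omega
              simp [this, h2, h3]
        · have h2 : ¬ j = k - 1 := by omega
          have h3 : ¬ j = k := by omega
          simp [h1, h2, h3]
      rw [Finset.sum_congr rfl hterm, Finset.sum_add_distrib,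
        Finset.sum_ite_eq' (range (n + 1)) (k - 1) (fun j => (n.choose j : ℝ)),
        Finset.sum_ite_eq' (range (n + 1)) k (fun j => (n.choose j : ℝ))]
      simp only [Finset.mem_range]
      by_cases h1 : k ≤ n
      · have h2 : k - 1 < n + 1 := by omega
        have h3 : k < n + 1 := by omega
        rw [if_pos h2, if_pos h3]
        have hk1 : k - 1 + 1 = k := by omega
        have hnat : (n + 1).choose k = n.choose (k - 1) + n.choose k := by
          simpa [hk1] using Nat.choose_succ_succ n (k - 1)
        rw [hnat]
        push_cast
        ring
      · by_cases h4 : k = n + 1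
        · have h2 : k - 1 < n + 1 := by omega
          have h3 : ¬ k < n + 1 := by omega
          rw [if_pos h2, if_neg h3]
          subst h4
          simp
        · have h2 : ¬ k - 1 < n + 1 := by omega
          have h3 : ¬ k < n + 1 := by omega
          rw [if_neg h2, if_neg h3, Nat.choose_eq_zero_of_lt (by omega)]
          simp
    · intro _
      rw [hkey, eval_finset_sum]
      have hterm : ∀ j ∈ range (n + 1),
          ((n.choose j • (if k ≤ j + 1 then p (j + 1 - k) else 0)).eval 0 : ℝ)
            = (if j = k - 1 then (n.choose j : ℝ) else 0) := by
        intro j hj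
        rw [eval_smul]
        by_cases h1 : k ≤ j + 1
        · rw [if_pos h1, eval_p_zero]
          by_cases h2 : j = k - 1
          · subst h2
            rw [if_pos (by omega : k - 1 + 1 - k = 0), if_pos rfl]
            simp
          · rw [if_neg (by omega : ¬ j + 1 - k = 0), if_neg h2]
            simp
        · have h2 : ¬ j = k - 1 := by omega
          simp [h1, h2]
      rw [Finset.sum_congr rfl hterm,
        Finset.sum_ite_eq' (range (n + 1)) (k - 1) (fun j => (n.choose j : ℝ))]
      simp only [Finset.mem_range, Nat.add_sub_cancel]
      by_cases h2 : k - 1 < n + 1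
      · rw [if_pos h2]
      · rw [if_neg h2, Nat.choose_eq_zero_of_lt (by omega)]
        simp
end

section
/- Let L = a_0 + a_1·x + (c_0 + c_1·x + c_2·x^2)·T as an operator on ℝ[x], where x denotes multiplication by x and T is the factorial derivative operator. Then for all n ≥ 2: L(p_n(x)) = (c_0 + c_1 + c_2) p_{n-1}(x) + (a_0 + a_1 + c_1 + 2c_2) p_n(x) + (a_1 + c_2) p_{n+1}(x). -/
open Polynomial Finset

lemma xp (k : ℕ) : X * p (k + 1) = p (k + 2) + p (k + 1) := by
  simp only [p]
  ring_nf

theorem stmt14 (T : Polynomial ℝ →ₗ[ℝ] Polynomial ℝ) (hT0 : T (p 0) = 0)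
    (hT : ∀ n : ℕ, T (p (n + 1)) = p n) (a0 a1 c0 c1 c2 : ℝ)
    (n : ℕ) (hn : 2 ≤ n) :
    C a0 * p n + C a1 * (X * p n) + (C c0 + C c1 * X + C c2 * X ^ 2) * T (p n) =
      (c0 + c1 + c2) • p (n - 1) + (a0 + a1 + c1 + 2 * c2) • p n
        + (a1 + c2) • p (n + 1) := by
  obtain ⟨m, rfl⟩ : ∃ m, n = m + 2 := ⟨n - 2, by omega⟩
  have h1 := xp (m + 1)
  have h2 := xp m
  have hx2 : (X : Polynomial ℝ) ^ 2 * p (m + 1) =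
      p (m + 3) + 2 * p (m + 2) + p (m + 1) := by
    rw [pow_two, mul_assoc, h2, mul_add, h1, h2]; ring
  simp only [show m + 2 - 1 = m + 1 by omega, hT, smul_eq_C_mul, C_add, C_mul, map_ofNat]
  linear_combination (C a1) * h1 + (C c1) * h2 + (C c2) * hx2
end
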